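/- Let H be a complex Hilbert space, V ⊆ B(H) a linear subspace, and e ∈ V with ‖e‖ = 1. Suppose that for every n and all x, y ∈ M_n(V) one has ‖x + y‖ ≤ ‖[x I_n⊗e]‖ · ‖[I_n⊗e ; y]‖. Then for every n and every x ∈ M_n(V) with ‖x‖ = 1, one has ‖[I_n⊗e x]‖ = ‖[I_n⊗e ; x]‖ = √2. -/

import Mathlib

/-
Each of the two block matrices has norm at most √(‖Iₙ⊗e‖² + ‖x‖²) ≤ √2, because a row or a
column of two blocks has norm at most the ℓ²-norm of the norms of its blocks. Conversely, the
hypothesis with y = x gives 2 = ‖x + x‖ ≤ ‖[x  Iₙ⊗e]‖ ‖[Iₙ⊗e ; x]‖, and ‖[x  Iₙ⊗e]‖ = ‖[Iₙ⊗e  x]‖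
since the two differ by a permutation of the columns. Two numbers at most √2 whose product is
at least 2 are both equal to √2.
-/

noncomputable section

open scoped BigOperators

variable {H : Type} [NormedAddCommGroup H] [InnerProductSpace ℂ H] [CompleteSpace H]

/-- A matrix over `B(H)` viewed as a bounded operator between the `ℓ²`-direct sums `H^κ → H^ι`. -/
noncomputable def opMatCLM {ι κ : Type} [Fintype ι] [Fintype κ]
    (A : Matrix ι κ (H →L[ℂ] H)) :
    PiLp 2 (fun _ : κ => H) →L[ℂ] PiLp 2 (fun _ : ι => H) :=
  ((PiLp.continuousLinearEquiv 2 ℂ (fun _ : ι => H)).symm.toContinuousLinearMap) ∘L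
    (ContinuousLinearMap.pi fun i => ∑ j, (A i j).comp (ContinuousLinearMap.proj j)) ∘L
    ((PiLp.continuousLinearEquiv 2 ℂ (fun _ : κ => H)).toContinuousLinearMap)

/-- The operator norm of a matrix over `B(H)`, viewed as an operator `H^κ → H^ι`. -/
noncomputable def opMatNorm {ι κ : Type} [Fintype ι] [Fintype κ]
    (A : Matrix ι κ (H →L[ℂ] H)) : ℝ := ‖opMatCLM A‖

/-- The norm of a matrix over a subspace `V ⊆ B(H)`, computed in `B(H)`. -/
noncomputable def subMatNorm {V : Submodule ℂ (H →L[ℂ] H)} {ι κ : Type} [Fintype ι] [Fintype κ]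
    (A : Matrix ι κ ↥V) : ℝ := opMatNorm (A.map (fun v => (v : H →L[ℂ] H)))

namespace ContinuousLinearMap

variable {𝕜 E F : Type*} [SeminormedAddCommGroup E] [SeminormedAddCommGroup F]

theorem opNorm_le_sqrt_of_sq_le [NontriviallyNormedField 𝕜] [NormedSpace 𝕜 E] [NormedSpace 𝕜 F]
    {f : E →L[𝕜] F} {c : ℝ} (h : ∀ u, ‖f u‖ ^ 2 ≤ c * ‖u‖ ^ 2) : ‖f‖ ≤ √c := by
  refine opNorm_le_bound _ (Real.sqrt_nonneg c) fun u => ?_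
  rw [← Real.sqrt_sq (norm_nonneg u), ← Real.sqrt_mul' c (sq_nonneg _)]
  exact Real.le_sqrt_of_sq_le (h u)

theorem opNorm_add_self [RCLike 𝕜] [NormedSpace 𝕜 E] [NormedSpace 𝕜 F] (f : E →L[𝕜] F) :
    ‖f + f‖ = 2 * ‖f‖ := by
  rw [← two_smul 𝕜, norm_smul, RCLike.norm_two]

end ContinuousLinearMap

section opMatCLM

omit [CompleteSpace H]

variable {ι ι' κ κ' : Type} [Fintype ι] [Fintype ι'] [Fintype κ] [Fintype κ']

@[simp]
lemma opMatCLM_apply (A : Matrix ι κ (H →L[ℂ] H)) (u : PiLp 2 (fun _ : κ => H)) (i : ι) :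
    opMatCLM A u i = ∑ j, A i j (u j) := by
  simp [opMatCLM]

lemma opMatCLM_add (A B : Matrix ι κ (H →L[ℂ] H)) :
    opMatCLM (A + B) = opMatCLM A + opMatCLM B := by
  ext u i
  simp [Finset.sum_add_distrib]

@[simp]
lemma opMatCLM_diagonal_apply [DecidableEq ι] (d : ι → H →L[ℂ] H) (u : PiLp 2 (fun _ : ι => H))
    (i : ι) : opMatCLM (Matrix.diagonal d) u i = d i (u i) := by
  rw [opMatCLM_apply, Finset.sum_eq_single i (fun j _ hji => by simp [hji.symm]) (by simp)]
  simp

lemma norm_opMatCLM_diagonal_le [DecidableEq ι] (e : H →L[ℂ] H) :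
    ‖opMatCLM (Matrix.diagonal fun _ : ι => e)‖ ≤ ‖e‖ := by
  rw [← Real.sqrt_sq (norm_nonneg e)]
  refine ContinuousLinearMap.opNorm_le_sqrt_of_sq_le fun u => ?_
  simp only [PiLp.norm_sq_eq_of_L2, opMatCLM_diagonal_apply, Finset.mul_sum]
  gcongr with i
  simpa [mul_pow] using pow_le_pow_left₀ (norm_nonneg _) (e.le_opNorm (u i)) 2

lemma norm_opMatCLM_fromRows_le (A : Matrix ι κ (H →L[ℂ] H)) (B : Matrix ι' κ (H →L[ℂ] H)) :
    ‖opMatCLM (Matrix.fromRows A B)‖ ≤ √(‖opMatCLM A‖ ^ 2 + ‖opMatCLM B‖ ^ 2) := by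
  refine ContinuousLinearMap.opNorm_le_sqrt_of_sq_le fun u => ?_
  have hA := (opMatCLM A).le_opNorm u
  have hB := (opMatCLM B).le_opNorm u
  calc ‖opMatCLM (Matrix.fromRows A B) u‖ ^ 2 = ‖opMatCLM A u‖ ^ 2 + ‖opMatCLM B u‖ ^ 2 := by
        simp [PiLp.norm_sq_eq_of_L2, Fintype.sum_sum_type]
    _ ≤ (‖opMatCLM A‖ * ‖u‖) ^ 2 + (‖opMatCLM B‖ * ‖u‖) ^ 2 := by gcongr
    _ = _ := by ring

lemma norm_opMatCLM_fromCols_le (A : Matrix ι κ (H →L[ℂ] H)) (B : Matrix ι κ' (H →L[ℂ] H)) :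
    ‖opMatCLM (Matrix.fromCols A B)‖ ≤ √(‖opMatCLM A‖ ^ 2 + ‖opMatCLM B‖ ^ 2) := by
  refine ContinuousLinearMap.opNorm_le_sqrt_of_sq_le fun u => ?_
  set u₁ : PiLp 2 (fun _ : κ => H) := WithLp.toLp 2 fun j => u (Sum.inl j)
  set u₂ : PiLp 2 (fun _ : κ' => H) := WithLp.toLp 2 fun j => u (Sum.inr j)
  have hsplit : opMatCLM (Matrix.fromCols A B) u = opMatCLM A u₁ + opMatCLM B u₂ := by
    ext i
    simp [Fintype.sum_sum_type, u₁, u₂]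
  have hu : ‖u‖ ^ 2 = ‖u₁‖ ^ 2 + ‖u₂‖ ^ 2 := by
    simp [PiLp.norm_sq_eq_of_L2, Fintype.sum_sum_type, u₁, u₂]
  have hA := (opMatCLM A).le_opNorm u₁
  have hB := (opMatCLM B).le_opNorm u₂
  calc ‖opMatCLM (Matrix.fromCols A B) u‖ ^ 2
      ≤ (‖opMatCLM A‖ * ‖u₁‖ + ‖opMatCLM B‖ * ‖u₂‖) ^ 2 := by
        rw [hsplit]
        gcongr
        exact (norm_add_le _ _).trans (add_le_add hA hB)
    _ ≤ (‖opMatCLM A‖ ^ 2 + ‖opMatCLM B‖ ^ 2) * ‖u‖ ^ 2 := by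
        rw [hu]
        nlinarith [sq_nonneg (‖opMatCLM A‖ * ‖u₂‖ - ‖opMatCLM B‖ * ‖u₁‖)]

lemma norm_opMatCLM_submatrix_equiv (A : Matrix ι κ (H →L[ℂ] H)) (σ : κ' ≃ κ) :
    ‖opMatCLM (A.submatrix id σ)‖ = ‖opMatCLM A‖ := by
  have h : opMatCLM (A.submatrix id σ) = (opMatCLM A).comp
      (LinearIsometryEquiv.piLpCongrLeft 2 ℂ H σ : PiLp 2 (fun _ : κ' => H) →L[ℂ] _) := by
    ext u i
    simp only [opMatCLM_apply, ContinuousLinearMap.comp_apply]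
    refine Fintype.sum_equiv σ _ _ fun j => ?_
    simp [Equiv.piCongrLeft']
  rw [h, ContinuousLinearMap.opNorm_comp_linearIsometryEquiv]

lemma norm_opMatCLM_fromCols_comm (A : Matrix ι κ (H →L[ℂ] H)) (B : Matrix ι κ' (H →L[ℂ] H)) :
    ‖opMatCLM (Matrix.fromCols A B)‖ = ‖opMatCLM (Matrix.fromCols B A)‖ := by
  have h : Matrix.fromCols A B = (Matrix.fromCols B A).submatrix id (Equiv.sumComm κ κ') := by
    ext i (j | j) <;> rfl
  rw [h, norm_opMatCLM_submatrix_equiv]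

end opMatCLM

section subMatNorm

omit [CompleteSpace H]

variable {V : Submodule ℂ (H →L[ℂ] H)} {ι ι' κ κ' : Type} [Fintype ι] [Fintype ι'] [Fintype κ]
  [Fintype κ']

lemma subMatNorm_nonneg (A : Matrix ι κ V) : 0 ≤ subMatNorm A :=
  norm_nonneg (opMatCLM (A.map (fun v => (v : H →L[ℂ] H))))

lemma subMatNorm_add_self (A : Matrix ι κ V) : subMatNorm (A + A) = 2 * subMatNorm A := by
  rw [subMatNorm, subMatNorm, opMatNorm, opMatNorm, Matrix.map_add _ Submodule.coe_add,
    opMatCLM_add, ContinuousLinearMap.opNorm_add_self]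

lemma subMatNorm_fromCols_le (A : Matrix ι κ V) (B : Matrix ι κ' V) :
    subMatNorm (Matrix.fromCols A B) ≤ √(subMatNorm A ^ 2 + subMatNorm B ^ 2) := by
  rw [subMatNorm, opMatNorm, Matrix.fromCols_map]
  exact norm_opMatCLM_fromCols_le _ _

lemma subMatNorm_fromRows_le (A : Matrix ι κ V) (B : Matrix ι' κ V) :
    subMatNorm (Matrix.fromRows A B) ≤ √(subMatNorm A ^ 2 + subMatNorm B ^ 2) := by
  rw [subMatNorm, opMatNorm, Matrix.fromRows_map]
  exact norm_opMatCLM_fromRows_le _ _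

lemma subMatNorm_fromCols_comm (A : Matrix ι κ V) (B : Matrix ι κ' V) :
    subMatNorm (Matrix.fromCols A B) = subMatNorm (Matrix.fromCols B A) := by
  rw [subMatNorm, subMatNorm, opMatNorm, opMatNorm, Matrix.fromCols_map, Matrix.fromCols_map]
  exact norm_opMatCLM_fromCols_comm _ _

lemma subMatNorm_diagonal_le [DecidableEq ι] (e : V) :
    subMatNorm (Matrix.diagonal fun _ : ι => e) ≤ ‖(e : H →L[ℂ] H)‖ := by
  rw [subMatNorm, opMatNorm, Matrix.diagonal_map Submodule.coe_zero]
  exact norm_opMatCLM_diagonal_le _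

end subMatNorm

lemma eq_and_eq_of_le_of_sq_le_mul {a b c : ℝ} (ha : 0 ≤ a) (hb : 0 ≤ b) (hac : a ≤ c)
    (hbc : b ≤ c) (h : c ^ 2 ≤ a * b) : a = c ∧ b = c := by
  constructor <;> nlinarith

/-- Let `V ⊆ B(H)` be a linear subspace and `e ∈ V` with `‖e‖ = 1`.  If for every `n` and all
`x, y ∈ Mₙ(V)` one has `‖x + y‖ ≤ ‖[x  Iₙ⊗e]‖ ‖[Iₙ⊗e ; y]‖`, then for every `x ∈ Mₙ(V)` with
`‖x‖ = 1` one has `‖[Iₙ⊗e  x]‖ = ‖[Iₙ⊗e ; x]‖ = √2`. -/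
theorem row_column_norm_sqrt_two
    (V : Submodule ℂ (H →L[ℂ] H)) (e : ↥V) (he : ‖(e : H →L[ℂ] H)‖ = 1)
    (hyp : ∀ (n : ℕ) (x y : Matrix (Fin n) (Fin n) ↥V),
      subMatNorm (x + y) ≤
        subMatNorm (Matrix.fromCols x (Matrix.diagonal fun _ : Fin n => e)) *
          subMatNorm (Matrix.fromRows (Matrix.diagonal fun _ : Fin n => e) y)) :
    ∀ (n : ℕ) (x : Matrix (Fin n) (Fin n) ↥V), subMatNorm x = 1 →
      subMatNorm (Matrix.fromCols (Matrix.diagonal fun _ : Fin n => e) x) = Real.sqrt 2 ∧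
      subMatNorm (Matrix.fromRows (Matrix.diagonal fun _ : Fin n => e) x) = Real.sqrt 2 := by
  intro n x hx
  have hxx := hyp n x x
  set E := Matrix.diagonal fun _ : Fin n => e
  have hE : subMatNorm E ≤ 1 := he ▸ subMatNorm_diagonal_le e
  have hE0 := subMatNorm_nonneg E
  have hbound : √(subMatNorm E ^ 2 + subMatNorm x ^ 2) ≤ √2 := by
    gcongr
    nlinarith
  have hprod : √2 ^ 2 ≤ subMatNorm (Matrix.fromCols E x) * subMatNorm (Matrix.fromRows E x) := by
    simpa [subMatNorm_add_self, hx, subMatNorm_fromCols_comm x E] using hxx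
  exact eq_and_eq_of_le_of_sq_le_mul (subMatNorm_nonneg _) (subMatNorm_nonneg _)
    ((subMatNorm_fromCols_le E x).trans hbound) ((subMatNorm_fromRows_le E x).trans hbound) hprod
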